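/- For n = 5 the only induced odd cycles of length ≥ 5 in the noncrossing graph G₅ are 5-cycles on the chord sets equivalent to {12, 23, 34, 45, 15}; in particular, the second secant ideal of the edge ideal of G₅ is the principal ideal generated by x₁₂x₂₃x₃₄x₄₅x₁₅ together with its dihedral images, which for n = 5 is the single monomial ideal ⟨x₁₂x₂₃x₃₄x₄₅x₁₅⟩. -/

import Mathlib

/-!
`G₅` is the 5-cycle of sides `01 – 23 – 40 – 12 – 34` with one pendant diagonal at each side
(the diagonal disjoint from it). A vertex of an induced cycle has two neighbours in it, so only
sides qualify, and a nonempty 2-regular set of vertices of an induced cycle is the whole cycle.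

For the secant ideal, work in the join: `x_c = y_c + z_c` where the `y`'s and the `z`'s each
satisfy the edge relations. Expanding `∏ (y_c + z_c)` along an odd cycle, every term contains a
monochromatic edge, so the pentagon monomial lies in the secant ideal. Conversely, deleting any
side `c` from `G₅` leaves a forest; a 2-colouring of it gives a specialisation of the join which
kills the join ideal and acts as the identity modulo `x_c`. Hence every element of the secant
ideal is divisible by every side variable, and therefore by their product.
-/

open MvPolynomial

/-- A chord of the convex `n`-gon: a pair `i < j` of vertices. -/
def Chord (n : ℕ) := {p : Fin n × Fin n // p.1 < p.2}

/-- Two chords cross iff they share a vertex or interleave. -/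
def crosses {n : ℕ} (c d : Chord n) : Prop :=
  (c.1.1 = d.1.1 ∨ c.1.1 = d.1.2 ∨ c.1.2 = d.1.1 ∨ c.1.2 = d.1.2) ∨
  (c.1.1 < d.1.1 ∧ d.1.1 < c.1.2 ∧ c.1.2 < d.1.2) ∨
  (d.1.1 < c.1.1 ∧ c.1.1 < d.1.2 ∧ d.1.2 < c.1.2)

/-- The noncrossing graph `Gₙ`. -/
def noncrossingGraph (n : ℕ) : SimpleGraph (Chord n) where
  Adj c d := c ≠ d ∧ ¬ crosses c d
  symm := by
    constructor
    rintro c d ⟨hne, hcr⟩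
    refine ⟨hne.symm, fun h => hcr ?_⟩
    rcases h with (h | h | h | h) | h | h
    · exact Or.inl (Or.inl h.symm)
    · exact Or.inl (Or.inr <| Or.inr <| Or.inl h.symm)
    · exact Or.inl (Or.inr <| Or.inl h.symm)
    · exact Or.inl (Or.inr <| Or.inr <| Or.inr h.symm)
    · exact Or.inr (Or.inr h)
    · exact Or.inr (Or.inl h)
  loopless := by constructor; rintro c ⟨hne, -⟩; exact hne rfl

/-- The edge ideal of a graph, in variables indexed by the vertices. -/
noncomputable def edgeIdeal {V : Type*} (G : SimpleGraph V) :
    Ideal (MvPolynomial V ℂ) :=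
  Ideal.span {f | ∃ v w : V, G.Adj v w ∧ f = X v * X w}

/-- The second secant ideal, via the join construction. -/
noncomputable def secantIdeal2 {V : Type*} (I : Ideal (MvPolynomial V ℂ)) :
    Ideal (MvPolynomial V ℂ) :=
  Ideal.comap (rename (fun v : V => ((0 : Fin 3), v)) : _ →ₐ[ℂ] _)
    (Ideal.map (rename (fun v : V => ((1 : Fin 3), v)) : _ →ₐ[ℂ] _) I ⊔
     Ideal.map (rename (fun v : V => ((2 : Fin 3), v)) : _ →ₐ[ℂ] _) I ⊔
     Ideal.span {f | ∃ v : V, f = X (0, v) - X (1, v) - X (2, v)})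

open Fin.NatCast in
theorem Fin.exists_mem_iff_add_one_mem_of_odd {n : ℕ} [NeZero n] (hn : Odd n)
    (t : Finset (Fin n)) : ∃ i, (i ∈ t ↔ i + 1 ∈ t) := by
  by_contra! h
  have alternate : ∀ k : ℕ, ((k : Fin n) ∈ t ↔ ((0 : Fin n) ∈ t ↔ Even k)) := by
    intro k
    induction k with
    | zero => simp
    | succ k ih =>
      have := h (k : Fin n)
      rw [Nat.cast_succ, Nat.even_add_one]
      tauto
  simpa [Nat.not_even_iff_odd.mpr hn] using alternate n

theorem Fin.prod_univ_add_eq_zero_of_odd {R : Type*} [CommSemiring R] {n : ℕ} [NeZero n]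
    (hn : Odd n) (hn1 : 1 < n) (a b : Fin n → R)
    (ha : ∀ i, a i * a (i + 1) = 0) (hb : ∀ i, b i * b (i + 1) = 0) :
    ∏ i, (a i + b i) = 0 := by
  rw [Finset.prod_add]
  refine Finset.sum_eq_zero fun t _ => ?_
  obtain ⟨i, hi⟩ := Fin.exists_mem_iff_add_one_mem_of_odd hn t
  have hne : i ≠ i + 1 := by
    obtain ⟨k, rfl⟩ : ∃ k, n = k + 2 := ⟨n - 2, by omega⟩
    simp
  by_cases hit : i ∈ t
  · have hdvd : a i * a (i + 1) ∣ ∏ j ∈ t, a j := by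
      rw [← Finset.prod_pair hne]
      exact Finset.prod_dvd_prod_of_subset _ _ _ (by grind)
    rw [ha, zero_dvd_iff] at hdvd
    rw [hdvd, zero_mul]
  · have hdvd : b i * b (i + 1) ∣ ∏ j ∈ Finset.univ \ t, b j := by
      rw [← Finset.prod_pair hne]
      exact Finset.prod_dvd_prod_of_subset _ _ _ (by grind)
    rw [hb, zero_dvd_iff] at hdvd
    rw [hdvd, mul_zero]

theorem MvPolynomial.mem_span_prod_X_of_forall_mem_span_X {σ R : Type*} [CommSemiring R]
    {s : Finset σ} {f : MvPolynomial σ R} (h : ∀ v ∈ s, f ∈ Ideal.span {X v}) :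
    f ∈ Ideal.span {∏ v ∈ s, X v} := by
  classical
  have hprod : ∏ v ∈ s, (X v : MvPolynomial σ R) =
      monomial (∑ v ∈ s, Finsupp.single v 1) 1 := by
    simp only [monomial_sum_one, X]
  rw [hprod, ← Set.image_singleton (f := fun m => monomial m (1 : R)),
    mem_ideal_span_monomial_image]
  intro m hm
  refine ⟨_, rfl, fun w => ?_⟩
  simp only [Finsupp.finsetSum_apply, Finsupp.single_apply, Finset.sum_ite_eq']
  split_ifs with hw
  · have := h w hw
    rw [← Set.image_singleton (f := X), mem_ideal_span_X_image] at this
    obtain ⟨i, rfl, hi⟩ := this m hm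
    exact Nat.one_le_iff_ne_zero.mpr hi
  · exact Nat.zero_le _

section Secant

variable {V : Type*}

noncomputable def secantJoinIdeal (I : Ideal (MvPolynomial V ℂ)) :
    Ideal (MvPolynomial (Fin 3 × V) ℂ) :=
  Ideal.map (rename (fun v : V => ((1 : Fin 3), v)) : _ →ₐ[ℂ] _) I ⊔
    Ideal.map (rename (fun v : V => ((2 : Fin 3), v)) : _ →ₐ[ℂ] _) I ⊔
    Ideal.span {f | ∃ v : V, f = X (0, v) - X (1, v) - X (2, v)}

theorem mem_secantIdeal2_iff {I : Ideal (MvPolynomial V ℂ)} {f : MvPolynomial V ℂ} :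
    f ∈ secantIdeal2 I ↔ rename (fun v : V => ((0 : Fin 3), v)) f ∈ secantJoinIdeal I :=
  Iff.rfl

theorem edgeIdeal_le_iff {G : SimpleGraph V} {K : Ideal (MvPolynomial V ℂ)} :
    edgeIdeal G ≤ K ↔ ∀ u w, G.Adj u w → X u * X w ∈ K := by
  rw [edgeIdeal, Ideal.span_le]
  constructor
  · exact fun h u w huw => h ⟨u, w, huw, rfl⟩
  · rintro h _ ⟨u, w, huw, rfl⟩
    exact h u w huw

theorem secantJoinIdeal_edgeIdeal_le_ker {S : Type*} [CommRing S] {G : SimpleGraph V}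
    (φ : MvPolynomial (Fin 3 × V) ℂ →+* S)
    (h₁ : ∀ u w, G.Adj u w → φ (X (1, u)) * φ (X (1, w)) = 0)
    (h₂ : ∀ u w, G.Adj u w → φ (X (2, u)) * φ (X (2, w)) = 0)
    (h₀ : ∀ v, φ (X (0, v)) = φ (X (1, v)) + φ (X (2, v))) :
    secantJoinIdeal (edgeIdeal G) ≤ RingHom.ker φ := by
  refine sup_le (sup_le ?_ ?_) ?_
  · rw [Ideal.map_le_iff_le_comap, edgeIdeal_le_iff]
    intro u w huw
    simpa [RingHom.mem_ker] using h₁ u w huw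
  · rw [Ideal.map_le_iff_le_comap, edgeIdeal_le_iff]
    intro u w huw
    simpa [RingHom.mem_ker] using h₂ u w huw
  · rw [Ideal.span_le]
    rintro _ ⟨v, rfl⟩
    simp [RingHom.mem_ker, h₀]

theorem prod_X_mem_secantIdeal2_of_odd_cycle (G : SimpleGraph V) {n : ℕ} [NeZero n]
    (hn : Odd n) (hn1 : 1 < n) (σ : Fin n → V) (hσ : ∀ i, G.Adj (σ i) (σ (i + 1))) :
    ∏ i, X (σ i) ∈ secantIdeal2 (edgeIdeal G) := by
  rw [mem_secantIdeal2_iff, ← Ideal.Quotient.eq_zero_iff_mem]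
  set J := secantJoinIdeal (edgeIdeal G)
  have hsplit (v : V) : Ideal.Quotient.mk J (X (0, v)) =
      Ideal.Quotient.mk J (X (1, v)) + Ideal.Quotient.mk J (X (2, v)) := by
    rw [← sub_eq_zero, ← map_add, ← map_sub, Ideal.Quotient.eq_zero_iff_mem, ← sub_sub]
    exact Ideal.mem_sup_right (Ideal.subset_span ⟨v, rfl⟩)
  have hedge (j : Fin 3) (hj : j = 1 ∨ j = 2) (i : Fin n) :
      Ideal.Quotient.mk J (X (j, σ i)) * Ideal.Quotient.mk J (X (j, σ (i + 1))) = 0 := by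
    rw [← map_mul, Ideal.Quotient.eq_zero_iff_mem]
    have hmem := Ideal.mem_map_of_mem (rename fun v : V => (j, v))
      (Ideal.subset_span ⟨_, _, hσ i, rfl⟩ : X (σ i) * X (σ (i + 1)) ∈ edgeIdeal G)
    rw [map_mul, rename_X, rename_X] at hmem
    rcases hj with rfl | rfl
    · exact Ideal.mem_sup_left (Ideal.mem_sup_left hmem)
    · exact Ideal.mem_sup_left (Ideal.mem_sup_right hmem)
  simp only [map_prod, rename_X, hsplit]
  exact Fin.prod_univ_add_eq_zero_of_odd hn hn1 _ _ (hedge 1 (.inl rfl)) (hedge 2 (.inr rfl))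

theorem secantIdeal2_edgeIdeal_le_span_X {G : SimpleGraph V} {v : V}
    (hG : (G.induce {v}ᶜ).Colorable 2) :
    secantIdeal2 (edgeIdeal G) ≤ Ideal.span {X v} := by
  classical
  obtain ⟨C⟩ := hG
  let χ : V → Fin 2 := fun w => if h : w = v then 0 else C ⟨w, h⟩
  have hχ {u w : V} (huw : G.Adj u w) (hu : u ≠ v) (hw : w ≠ v) : χ u ≠ χ w := by
    simpa [χ, hu, hw] using C.valid (show (G.induce {v}ᶜ).Adj ⟨u, hu⟩ ⟨w, hw⟩ from huw)
  -- Copy `0` specialises to the identity and copy `j.succ` to colour class `j`; modulo `X v`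
  -- this kills the join ideal.
  let g : Fin 3 × V → MvPolynomial V ℂ := fun p =>
    if p.1 = 0 ∨ p.1 = (χ p.2).succ then X p.2 else 0
  let π := Ideal.Quotient.mk (Ideal.span {(X v : MvPolynomial V ℂ)})
  let φ := π.comp (aeval (R := ℂ) g).toRingHom
  have hXv : π (X v) = 0 := Ideal.Quotient.eq_zero_iff_mem.mpr (Ideal.mem_span_singleton_self _)
  have hφ (p : Fin 3 × V) : φ (X p) = π (g p) := by simp [φ]
  have hedge (j : Fin 3) (hj : j ≠ 0) (u w : V) (huw : G.Adj u w) :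
      φ (X (j, u)) * φ (X (j, w)) = 0 := by
    simp only [hφ, g, hj, false_or]
    split_ifs with hju hjw
    · by_cases hu : u = v
      · simp [hu, hXv]
      by_cases hw : w = v
      · simp [hw, hXv]
      exact absurd (Fin.succ_injective _ (hju.symm.trans hjw)) (hχ huw hu hw)
    all_goals simp
  have hsplit (w : V) : φ (X (0, w)) = φ (X (1, w)) + φ (X (2, w)) := by
    simp only [hφ, g]
    generalize χ w = k
    fin_cases k <;> simp
  intro f hf
  have hker := secantJoinIdeal_edgeIdeal_le_ker φ (hedge 1 (by decide)) (hedge 2 (by decide))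
    hsplit hf
  have hg₀ : g ∘ (fun w : V => ((0 : Fin 3), w)) = X := by ext1 w; simp [g]
  rw [RingHom.mem_ker] at hker
  change π (aeval g (rename _ f)) = 0 at hker
  rwa [aeval_rename, hg₀, aeval_X_left_apply, Ideal.Quotient.eq_zero_iff_mem] at hker

end Secant

theorem SimpleGraph.card_neighborFinset_inter_eq_two_of_induce_iso_cycleGraph {V : Type*}
    [Fintype V] [DecidableEq V] {G : SimpleGraph V} [DecidableRel G.Adj] {S : Finset V}
    {m : ℕ} (hm : 3 ≤ m) (e : G.induce (S : Set V) ≃g cycleGraph m) {v : V} (hv : v ∈ S) :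
    (G.neighborFinset v ∩ S).card = 2 := by
  obtain ⟨k, rfl⟩ : ∃ k, m = k + 3 := ⟨m - 3, by omega⟩
  have hdeg := e.degree_eq ⟨v, hv⟩
  rw [cycleGraph_degree_three_le, ← card_neighborFinset_eq_degree] at hdeg
  rw [hdeg, ← Finset.card_map (.subtype (· ∈ (S : Set V)))]
  congr 1
  ext w
  simp [and_comm]

open Fin.NatCast in
theorem SimpleGraph.eq_image_of_card_neighborFinset_inter_eq_two {V : Type*} [Fintype V]
    [DecidableEq V] {G : SimpleGraph V} [DecidableRel G.Adj] {n : ℕ} [NeZero n]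
    {σ : Fin n → V} (hσ : ∀ i, G.Adj (σ i) (σ (i + 1)))
    (hσ₂ : ∀ i, (G.neighborFinset (σ i) ∩ Finset.univ.image σ).card ≤ 2)
    {S : Finset V} (hS : S ⊆ Finset.univ.image σ) (hne : S.Nonempty)
    (hdeg : ∀ v ∈ S, (G.neighborFinset v ∩ S).card = 2) :
    S = Finset.univ.image σ := by
  have hsucc (i : Fin n) (hi : σ i ∈ S) : σ (i + 1) ∈ S := by
    have hsub : G.neighborFinset (σ i) ∩ S ⊆ G.neighborFinset (σ i) ∩ Finset.univ.image σ :=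
      Finset.inter_subset_inter_left hS
    have hnext : σ (i + 1) ∈ G.neighborFinset (σ i) ∩ Finset.univ.image σ :=
      Finset.mem_inter.mpr ⟨(G.mem_neighborFinset _ _).mpr (hσ i),
        Finset.mem_image_of_mem _ (Finset.mem_univ _)⟩
    rw [← Finset.eq_of_subset_of_card_le hsub ((hσ₂ i).trans (hdeg _ hi).ge)] at hnext
    exact (Finset.mem_inter.mp hnext).2
  obtain ⟨v, hv⟩ := hne
  obtain ⟨i, -, rfl⟩ := Finset.mem_image.mp (hS hv)
  have hall (k : ℕ) : σ (i + k) ∈ S := by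
    induction k with
    | zero => simpa using hv
    | succ k ih => simpa [Nat.cast_succ, ← add_assoc] using hsucc _ ih
  refine hS.antisymm fun w hw => ?_
  obtain ⟨j, -, rfl⟩ := Finset.mem_image.mp hw
  simpa using hall (j - i).val

instance (n : ℕ) : Fintype (Chord n) :=
  inferInstanceAs (Fintype {p : Fin n × Fin n // p.1 < p.2})

instance (n : ℕ) : DecidableEq (Chord n) :=
  inferInstanceAs (DecidableEq {p : Fin n × Fin n // p.1 < p.2})

instance (n : ℕ) : DecidableRel (crosses (n := n)) := fun c d => by
  unfold crosses; infer_instance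

instance (n : ℕ) : DecidableRel (noncrossingGraph n).Adj := fun c d =>
  inferInstanceAs (Decidable (c ≠ d ∧ ¬crosses c d))

def Chord.vertices {n : ℕ} (c : Chord n) : Finset (Fin n) := {c.1.1, c.1.2}

theorem Chord.vertices_injective {n : ℕ} : Function.Injective (Chord.vertices (n := n)) := by
  rintro ⟨⟨a, b⟩, hab⟩ ⟨⟨c, d⟩, hcd⟩ h
  have h' : ({a, b} : Set (Fin n)) = {c, d} := by
    simpa [Chord.vertices, ← Finset.coe_inj] using h
  rcases Set.pair_eq_pair_iff.mp h' with ⟨rfl, rfl⟩ | ⟨rfl, rfl⟩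
  · rfl
  · exact absurd (hab.trans hcd) (lt_irrefl _)

def pentagonCycle : Fin 5 → Chord 5 :=
  ![⟨(0, 1), by decide⟩, ⟨(2, 3), by decide⟩, ⟨(0, 4), by decide⟩, ⟨(1, 2), by decide⟩,
    ⟨(3, 4), by decide⟩]

def pentagonSides : Finset (Chord 5) := Finset.univ.image pentagonCycle

theorem mem_pentagonSides_iff (c : Chord 5) :
    c ∈ pentagonSides ↔ ∃ l : Fin 5, c.vertices = {l, l + 1} := by
  revert c; decide

theorem noncrossingGraph_adj_pentagonCycle (i : Fin 5) :
    (noncrossingGraph 5).Adj (pentagonCycle i) (pentagonCycle (i + 1)) := by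
  revert i; decide

theorem pentagonCycle_injective : Function.Injective pentagonCycle := by decide

theorem card_neighborFinset_inter_pentagonSides (i : Fin 5) :
    ((noncrossingGraph 5).neighborFinset (pentagonCycle i) ∩ pentagonSides).card = 2 := by
  revert i; decide

-- Each diagonal is adjacent only to the side disjoint from it.
theorem mem_pentagonSides_of_two_le_degree (c : Chord 5)
    (hc : 2 ≤ (noncrossingGraph 5).degree c) : c ∈ pentagonSides := by
  revert c; decide

-- `G₅` minus the side `{l, l + 1}` is the path `{l+2, l+3} – {l+4, l} – {l+1, l+2} – {l+3, l+4}`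
-- with pendant diagonals; colour `0` is one side of its bipartition.
def sideDeletionColoring (l : Fin 5) (c : Chord 5) : Fin 2 :=
  if l + 2 ∈ c.vertices ∨ c.vertices = {l + 1, l + 3} then 0 else 1

theorem sideDeletionColoring_ne {l : Fin 5} {u w : Chord 5} (huw : (noncrossingGraph 5).Adj u w)
    (hu : u.vertices ≠ {l, l + 1}) (hw : w.vertices ≠ {l, l + 1}) :
    sideDeletionColoring l u ≠ sideDeletionColoring l w := by
  revert l u w; decide

theorem noncrossingGraph_five_induce_compl_colorable {c : Chord 5} (hc : c ∈ pentagonSides) :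
    ((noncrossingGraph 5).induce {c}ᶜ).Colorable 2 := by
  obtain ⟨l, hl⟩ := (mem_pentagonSides_iff c).mp hc
  refine ⟨.mk (fun u => sideDeletionColoring l u)
    fun {u w} huw => sideDeletionColoring_ne huw ?_ ?_⟩
  · exact hl ▸ Chord.vertices_injective.ne u.2
  · exact hl ▸ Chord.vertices_injective.ne w.2

theorem eq_pentagonSides_of_induce_iso_cycleGraph {S : Finset (Chord 5)} {m : ℕ} (hm : 3 ≤ m)
    (e : (noncrossingGraph 5).induce (S : Set (Chord 5)) ≃g SimpleGraph.cycleGraph m) :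
    S = pentagonSides := by
  have hdeg v (hv : v ∈ S) :=
    SimpleGraph.card_neighborFinset_inter_eq_two_of_induce_iso_cycleGraph hm e hv
  have hne : S.Nonempty := ⟨_, (e.symm ⟨0, by omega⟩).2⟩
  have hsub : S ⊆ pentagonSides := fun v hv =>
    mem_pentagonSides_of_two_le_degree v <| by
      rw [← SimpleGraph.card_neighborFinset_eq_degree, ← hdeg v hv]
      exact Finset.card_le_card Finset.inter_subset_left
  exact SimpleGraph.eq_image_of_card_neighborFinset_inter_eq_two
    noncrossingGraph_adj_pentagonCycle (fun i => (card_neighborFinset_inter_pentagonSides i).le)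
    hsub hne hdeg

theorem secantIdeal2_edgeIdeal_noncrossingGraph_five :
    secantIdeal2 (edgeIdeal (noncrossingGraph 5)) = Ideal.span {∏ i, X (pentagonCycle i)} := by
  have hprod :
      ∏ i, (X (pentagonCycle i) : MvPolynomial (Chord 5) ℂ) = ∏ c ∈ pentagonSides, X c :=
    (Finset.prod_image fun i _ j _ h => pentagonCycle_injective h).symm
  refine le_antisymm (fun f hf => ?_) ?_
  · rw [hprod]
    exact MvPolynomial.mem_span_prod_X_of_forall_mem_span_X fun c hc =>
      secantIdeal2_edgeIdeal_le_span_X (noncrossingGraph_five_induce_compl_colorable hc) hf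
  · rw [Ideal.span_le, Set.singleton_subset_iff]
    exact prod_X_mem_secantIdeal2_of_odd_cycle _ (by decide) (by decide) _
      noncrossingGraph_adj_pentagonCycle

/-- For `n = 5`: the only induced odd cycles of length `≥ 5` in the noncrossing
graph `G₅` are the 5-cycles on the pentagon chord set `{12,23,34,45,15}`, and
the second secant ideal of the edge ideal of `G₅` is the principal monomial
ideal `⟨x₁₂x₂₃x₃₄x₄₅x₁₅⟩`. -/
theorem noncrossingGraph_five_secant :
    (∀ S : Finset (Chord 5),
      (∃ m : ℕ, Odd m ∧ 5 ≤ m ∧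
        Nonempty ((noncrossingGraph 5).induce (↑S : Set (Chord 5)) ≃g
          SimpleGraph.cycleGraph m)) →
      (↑S : Set (Chord 5)) =
        {c : Chord 5 | ∃ l : Fin 5,
          ({c.1.1, c.1.2} : Finset (Fin 5)) = {l, l + 1}}) ∧
    secantIdeal2 (edgeIdeal (noncrossingGraph 5)) =
      Ideal.span {X (⟨(0, 1), by decide⟩ : Chord 5) *
        X (⟨(1, 2), by decide⟩ : Chord 5) * X (⟨(2, 3), by decide⟩ : Chord 5) *
        X (⟨(3, 4), by decide⟩ : Chord 5) * X (⟨(0, 4), by decide⟩ : Chord 5)} := by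
  refine ⟨fun S ⟨m, _, hm, ⟨e⟩⟩ => ?_, ?_⟩
  · rw [eq_pentagonSides_of_induce_iso_cycleGraph (by omega) e]
    ext c
    exact mem_pentagonSides_iff c
  · -- The statement's variables are typed by the unfolded subtype, which `ring` does not see
    -- through; so reorder in `Chord 5` first and close by `rfl`.
    have hgen : ∏ i, (X (pentagonCycle i) : MvPolynomial (Chord 5) ℂ) =
        X (pentagonCycle 0) * X (pentagonCycle 3) * X (pentagonCycle 1) *
          X (pentagonCycle 4) * X (pentagonCycle 2) := by
      rw [Fin.prod_univ_five]; ring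
    rw [secantIdeal2_edgeIdeal_noncrossingGraph_five, hgen]
    rfl
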